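/- For n ≥ 1, the number of plane trees with n edges having no young leaves equals the Motzkin number M_{n-1}. -/

import Mathlib

/-- A plane tree: a root together with an ordered (possibly empty) list of subtrees. -/
inductive PlaneTree where
  | node : List PlaneTree → PlaneTree

namespace PlaneTree

/-- The number of edges of a plane tree. -/
def edges : PlaneTree → ℕ
  | node ts => (ts.attach.map (fun t => edges t.1 + 1)).sum
decreasing_by have := List.sizeOf_lt_of_mem t.2; simp at *; omega

/-- Indicator that a tree is a single vertex (i.e. the corresponding child is a leaf). -/
def isLeafInd : PlaneTree → ℕ
  | node [] => 1
  | node (_ :: _) => 0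

/-- The number of old leaves: leaves that are the leftmost child of their parent. -/
def oldLeaves : PlaneTree → ℕ
  | node [] => 0
  | node (t :: ts) =>
      isLeafInd t + oldLeaves t + (ts.attach.map (fun s => oldLeaves s.1)).sum
decreasing_by
  · simp; omega
  · have := List.sizeOf_lt_of_mem s.2; simp at *; omega

/-- The number of young leaves: leaves that are not the leftmost child of their parent. -/
def youngLeaves : PlaneTree → ℕ
  | node [] => 0
  | node (t :: ts) =>
      youngLeaves t + (ts.attach.map (fun s => isLeafInd s.1 + youngLeaves s.1)).sum
decreasing_by
  · simp; omega
  · have := List.sizeOf_lt_of_mem s.2; simp at *; omega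

end PlaneTree

/-- The `m`-th Motzkin number, `M_m = Σ_k C(m,2k)·Catalan(k)`. -/
def motzkin (m : ℕ) : ℕ := ∑ k ∈ Finset.range (m + 1), m.choose (2 * k) * catalan k

/-!
Cut a plane tree into its leftmost subtree and the rest. Let `a n` count the trees with `n` edges
and no young leaves, and `c n` those trees `u` with `n` edges to which a leaf can be grafted as new
leftmost subtree without creating a young leaf. The cut gives `a (n+1) = Σ_{i+j=n} a i * c j` and
`c (n+1) = Σ_{i+j=n, i ≥ 1} a i * c j`, hence `a (n+1) = c n + c (n+1)`; in generating functions
`A = 1 + x A C` and `A = (1 + x) C`, so `(1 + x) A = 1 + x + x A²`. Thus `n ↦ a (n+1)` satisfies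
the Motzkin recurrence `M (n+2) = M (n+1) + Σ_{i+j=n} M i * M j`, which the binomial formula for
`M` satisfies by the upper Vandermonde identity `Σ_{i+j=n} C(i,a) C(j,b) = C(n+1, a+b+1)` and the
Catalan recurrence.
-/

open Finset

theorem Nat.sum_antidiagonal_choose_mul_choose (a b n : ℕ) :
    ∑ p ∈ antidiagonal n, p.1.choose a * p.2.choose b = (n + 1).choose (a + b + 1) := by
  induction n generalizing b with
  | zero =>
    rw [Nat.antidiagonal_zero, sum_singleton]
    rcases a with _ | a <;> rcases b with _ | b <;> simp [Nat.choose_eq_zero_of_lt]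
  | succ n ih =>
    rw [Finset.Nat.sum_antidiagonal_succ']
    cases b with
    | zero =>
      have := ih 0
      simp only [Nat.choose_zero_right, mul_one, add_zero] at this ⊢
      rw [this, Nat.choose_succ_succ' (n + 1) a, add_comm]
    | succ b =>
      simp only [Nat.choose_succ_succ' _ b, mul_add, sum_add_distrib, ih, Nat.choose_zero_succ,
        mul_zero, zero_add]
      rw [show a + (b + 1) + 1 = a + b + 1 + 1 by ring, ← Nat.choose_succ_succ']

theorem motzkin_eq_sum_range {m N : ℕ} (h : m < N) :
    motzkin m = ∑ k ∈ range N, m.choose (2 * k) * catalan k := by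
  refine sum_subset (range_subset_range.2 h) fun k _ hk => ?_
  rw [Nat.choose_eq_zero_of_lt (by rw [mem_range] at hk; omega), zero_mul]

theorem sum_antidiagonal_motzkin_mul_motzkin (n : ℕ) :
    ∑ p ∈ antidiagonal n, motzkin p.1 * motzkin p.2 =
      ∑ m ∈ range (n + 1), (n + 1).choose (2 * m + 1) * catalan (m + 1) := by
  have expand : ∀ p ∈ antidiagonal n, motzkin p.1 * motzkin p.2 =
      ∑ k ∈ range (n + 1), ∑ l ∈ range (n + 1),
        p.1.choose (2 * k) * p.2.choose (2 * l) * (catalan k * catalan l) := by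
    intro p hp
    have := mem_antidiagonal.1 hp
    rw [motzkin_eq_sum_range (N := n + 1) (by omega), motzkin_eq_sum_range (N := n + 1) (by omega),
      sum_mul_sum]
    exact sum_congr rfl fun k _ => sum_congr rfl fun l _ => by ring
  calc _ = ∑ k ∈ range (n + 1), ∑ l ∈ range (n + 1),
        (n + 1).choose (2 * (k + l) + 1) * (catalan k * catalan l) := by
        rw [sum_congr rfl expand, sum_comm]
        refine sum_congr rfl fun k _ => ?_
        rw [sum_comm]
        refine sum_congr rfl fun l _ => ?_
        rw [← sum_mul, Nat.sum_antidiagonal_choose_mul_choose, mul_add]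
    _ = ∑ k ∈ range (n + 1), ∑ l ∈ range (n + 1 - k),
        (n + 1).choose (2 * (k + l) + 1) * (catalan k * catalan l) := by
        refine sum_congr rfl fun k _ => (sum_subset (range_subset_range.2 (by omega)) ?_).symm
        intro l hl hlk
        simp only [mem_range] at hl hlk
        rw [Nat.choose_eq_zero_of_lt (by omega), zero_mul]
    _ = ∑ m ∈ range (n + 1), ∑ k ∈ range (m + 1),
        (n + 1).choose (2 * (k + (m - k)) + 1) * (catalan k * catalan (m - k)) :=
        (sum_range_diag_flip _ fun k l =>
          (n + 1).choose (2 * (k + l) + 1) * (catalan k * catalan l)).symm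
    _ = _ := by
        refine sum_congr rfl fun m _ => ?_
        rw [catalan_succ',
          Nat.sum_antidiagonal_eq_sum_range_succ (fun k l => catalan k * catalan l), mul_sum]
        refine sum_congr rfl fun k hk => ?_
        rw [Nat.add_sub_cancel' (Nat.lt_succ_iff.1 (mem_range.1 hk))]

theorem motzkin_succ_succ (n : ℕ) :
    motzkin (n + 2) = motzkin (n + 1) + ∑ p ∈ antidiagonal n, motzkin p.1 * motzkin p.2 := by
  have pad : ∑ k ∈ range (n + 2), (n + 1).choose (2 * k + 1) * catalan (k + 1) =
      ∑ k ∈ range (n + 1), (n + 1).choose (2 * k + 1) * catalan (k + 1) := by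
    rw [sum_range_succ, Nat.choose_eq_zero_of_lt (by omega), zero_mul, add_zero]
  rw [sum_antidiagonal_motzkin_mul_motzkin, ← pad, motzkin, motzkin_eq_sum_range (N := n + 3)
    (by omega), sum_range_succ' _ (n + 2), sum_range_succ' _ (n + 2)]
  simp only [show ∀ k, 2 * (k + 1) = 2 * k + 1 + 1 by intro; ring, Nat.choose_succ_succ', add_mul,
    sum_add_distrib, mul_zero, Nat.choose_zero_right]
  ring

theorem eq_motzkin_of_recurrence {g : ℕ → ℕ} (h0 : g 0 = 1) (h1 : g 1 = 1)
    (h : ∀ n, g (n + 2) = g (n + 1) + ∑ p ∈ antidiagonal n, g p.1 * g p.2) : g = motzkin := by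
  funext n
  induction n using Nat.strong_induction_on with
  | _ n ih =>
    match n with
    | 0 => simp [h0, motzkin]
    | 1 => simp [h1, motzkin, sum_range_succ]
    | n + 2 =>
      rw [h, motzkin_succ_succ, ih (n + 1) (by omega)]
      refine congrArg _ (sum_congr rfl fun p hp => ?_)
      have := mem_antidiagonal.1 hp
      rw [ih p.1 (by omega), ih p.2 (by omega)]

theorem succ_eq_motzkin_of_sum_antidiagonal_mul_self {a : ℕ → ℕ} (h0 : a 0 = 1) (h1 : a 1 = 1)
    (h : ∀ n, a (n + 2) + a (n + 1) = ∑ p ∈ antidiagonal (n + 1), a p.1 * a p.2) (n : ℕ) :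
    a (n + 1) = motzkin n := by
  refine congrFun (eq_motzkin_of_recurrence (g := fun n => a (n + 1)) h1 ?_ fun n => ?_) n
  · have := h 0
    simp only [Nat.sum_antidiagonal_succ, Nat.antidiagonal_zero, sum_singleton, h0, h1, zero_add,
      mul_one] at this
    show a 2 = 1
    omega
  · have := h (n + 1)
    rw [Nat.sum_antidiagonal_succ, Nat.sum_antidiagonal_succ'] at this
    simp only [h0, one_mul, mul_one, add_assoc, Nat.reduceAdd] at this
    show a (n + 3) = a (n + 2) + ∑ p ∈ antidiagonal n, a (p.1 + 1) * a (p.2 + 1)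
    omega

theorem succ_eq_add_of_sum_antidiagonal {a b c : ℕ → ℕ} (ha0 : a 0 = 1) (hb0 : b 0 = 0)
    (hb : ∀ n, b (n + 1) = a (n + 1))
    (ha : ∀ n, a (n + 1) = ∑ p ∈ antidiagonal n, a p.1 * c p.2)
    (hc : ∀ n, c (n + 1) = ∑ p ∈ antidiagonal n, b p.1 * c p.2) (n : ℕ) :
    a (n + 1) = c n + c (n + 1) := by
  rw [ha, hc]
  cases n with
  | zero => simp [ha0, hb0]
  | succ n => simp [Nat.sum_antidiagonal_succ, ha0, hb0, hb]

theorem add_eq_sum_antidiagonal_mul_self {a c : ℕ → ℕ} (ha0 : a 0 = 1) (hc0 : c 0 = 1)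
    (ha : ∀ n, a (n + 1) = ∑ p ∈ antidiagonal n, a p.1 * c p.2)
    (hac : ∀ n, a (n + 1) = c n + c (n + 1)) (n : ℕ) :
    a (n + 2) + a (n + 1) = ∑ p ∈ antidiagonal (n + 1), a p.1 * a p.2 := by
  have hshift : a (n + 2) = a (n + 1) + ∑ p ∈ antidiagonal n, a p.1 * c (p.2 + 1) := by
    rw [ha (n + 1), Nat.sum_antidiagonal_succ', hc0, mul_one]
  simp only [Nat.sum_antidiagonal_succ', ha0, mul_one]
  rw [sum_congr rfl fun p _ => by rw [hac p.2, mul_add], sum_add_distrib, ← ha n]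
  omega

theorem Nat.card_subtype_add_eq_sum_antidiagonal {α β : Type*} (f : α → ℕ) (g : β → ℕ)
    (P : α → Prop) (Q : β → Prop) [∀ i, Finite {a // f a = i ∧ P a}]
    [∀ j, Finite {b // g b = j ∧ Q b}] (n : ℕ) :
    Nat.card {x : α × β // f x.1 + g x.2 = n ∧ P x.1 ∧ Q x.2} =
      ∑ p ∈ antidiagonal n,
        Nat.card {a // f a = p.1 ∧ P a} * Nat.card {b // g b = p.2 ∧ Q b} := by
  let e : {x : α × β // f x.1 + g x.2 = n ∧ P x.1 ∧ Q x.2} ≃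
      Σ p : antidiagonal n, {a // f a = p.1.1 ∧ P a} × {b // g b = p.1.2 ∧ Q b} :=
    { toFun x := ⟨⟨(f x.1.1, g x.1.2), mem_antidiagonal.2 x.2.1⟩,
        ⟨x.1.1, rfl, x.2.2.1⟩, ⟨x.1.2, rfl, x.2.2.2⟩⟩
      invFun y := ⟨(y.2.1.1, y.2.2.1), by
        obtain ⟨⟨p, hp⟩, ⟨a, ha⟩, ⟨b, hb⟩⟩ := y
        exact ⟨by rw [ha.1, hb.1]; exact mem_antidiagonal.1 hp, ha.2, hb.2⟩⟩
      left_inv _ := rfl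
      right_inv := by
        rintro ⟨⟨⟨i, j⟩, hp⟩, ⟨a, ha⟩, ⟨b, hb⟩⟩
        dsimp only at ha hb
        obtain ⟨rfl, -⟩ := ha
        obtain ⟨rfl, -⟩ := hb
        rfl }
  rw [Nat.card_congr e, Nat.card_sigma]
  simp only [Nat.card_prod]
  exact sum_coe_sort (antidiagonal n) fun p =>
    Nat.card {a // f a = p.1 ∧ P a} * Nat.card {b // g b = p.2 ∧ Q b}

namespace PlaneTree

def cons (t : PlaneTree) : PlaneTree → PlaneTree
  | node ts => node (t :: ts)

theorem cons_inj {t t' u u' : PlaneTree} : cons t u = cons t' u' ↔ t = t' ∧ u = u' := by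
  cases u; cases u'; simp [cons]

theorem edges_node (ts : List PlaneTree) :
    (node ts).edges = (ts.map fun t => t.edges + 1).sum := by
  rw [edges, List.attach_map_val (l := ts) (f := fun t => edges t + 1)]

theorem edges_cons (t u : PlaneTree) : (cons t u).edges = t.edges + u.edges + 1 := by
  cases u
  simp only [cons, edges_node, List.map_cons, List.sum_cons]
  ring

theorem edges_eq_zero_iff {T : PlaneTree} : T.edges = 0 ↔ T = node [] := by
  rcases T with ⟨_ | ⟨t, ts⟩⟩ <;> simp [edges_node]

theorem exists_cons_eq_of_edges_ne_zero {T : PlaneTree} (h : T.edges ≠ 0) :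
    ∃ t u, cons t u = T := by
  rcases T with ⟨_ | ⟨t, ts⟩⟩
  · exact absurd (edges_eq_zero_iff.2 rfl) h
  · exact ⟨t, node ts, rfl⟩

theorem finite_setOf_edges_le (n : ℕ) : {T : PlaneTree | T.edges ≤ n}.Finite := by
  induction n with
  | zero =>
    exact (Set.finite_singleton (node [])).subset fun T hT => edges_eq_zero_iff.1 (Nat.le_zero.1 hT)
  | succ n ih =>
    refine ((ih.image2 cons ih).insert (node [])).subset fun T hT => ?_
    by_cases h : T.edges = 0
    · exact Or.inl (edges_eq_zero_iff.1 h)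
    · obtain ⟨t, u, rfl⟩ := exists_cons_eq_of_edges_ne_zero h
      have hT : t.edges + u.edges + 1 ≤ n + 1 := edges_cons t u ▸ hT
      exact Or.inr ⟨t, show t.edges ≤ n by omega, u, show u.edges ≤ n by omega, rfl⟩

instance (n : ℕ) (P : PlaneTree → Prop) : Finite {T : PlaneTree // T.edges = n ∧ P T} :=
  ((finite_setOf_edges_le n).subset fun _ h => h.1.le).to_subtype

theorem youngLeaves_node_cons (t : PlaneTree) (ts : List PlaneTree) :
    (node (t :: ts)).youngLeaves =
      t.youngLeaves + (ts.map fun s => s.isLeafInd + s.youngLeaves).sum := by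
  rw [youngLeaves, List.attach_map_val (l := ts) (f := fun s => isLeafInd s + youngLeaves s)]

theorem youngLeaves_leaf : (node []).youngLeaves = 0 := by
  rw [youngLeaves]

theorem youngLeaves_cons (t u : PlaneTree) :
    (cons t u).youngLeaves = t.youngLeaves + (cons (node []) u).youngLeaves := by
  cases u
  simp [cons, youngLeaves_node_cons, youngLeaves_leaf]

theorem youngLeaves_cons_leaf_cons (t u : PlaneTree) :
    (cons (node []) (cons t u)).youngLeaves =
      t.isLeafInd + t.youngLeaves + (cons (node []) u).youngLeaves := by
  cases u
  simp [cons, youngLeaves_node_cons, youngLeaves_leaf, add_assoc]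

theorem isLeafInd_eq_zero_iff {t : PlaneTree} : t.isLeafInd = 0 ↔ t ≠ node [] := by
  rcases t with ⟨_ | _⟩ <;> simp [isLeafInd]

theorem card_edges_succ_eq_sum_antidiagonal (R P Q : PlaneTree → Prop)
    (h : ∀ t u, R (cons t u) ↔ P t ∧ Q u) (n : ℕ) :
    Nat.card {T : PlaneTree // T.edges = n + 1 ∧ R T} =
      ∑ p ∈ antidiagonal n, Nat.card {t : PlaneTree // t.edges = p.1 ∧ P t} *
        Nat.card {u : PlaneTree // u.edges = p.2 ∧ Q u} := by
  rw [← Nat.card_subtype_add_eq_sum_antidiagonal]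
  have hcons (x : {x : PlaneTree × PlaneTree // x.1.edges + x.2.edges = n ∧ P x.1 ∧ Q x.2}) :
      (cons x.1.1 x.1.2).edges = n + 1 ∧ R (cons x.1.1 x.1.2) := by
    rw [edges_cons, h]
    exact ⟨by omega, x.2.2⟩
  refine (Nat.card_eq_of_bijective (fun x => ⟨cons x.1.1 x.1.2, hcons x⟩) ⟨?_, ?_⟩).symm
  · rintro ⟨⟨t, u⟩, _⟩ ⟨⟨t', u'⟩, _⟩ htu
    obtain ⟨rfl, rfl⟩ := cons_inj.1 (congrArg Subtype.val htu)
    rfl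
  · rintro ⟨T, hT, hR⟩
    obtain ⟨t, u, rfl⟩ := exists_cons_eq_of_edges_ne_zero (T := T) (by omega)
    rw [edges_cons] at hT
    exact ⟨⟨(t, u), show t.edges + u.edges = n by omega, (h t u).1 hR⟩, rfl⟩

noncomputable def noYoungCount (n : ℕ) : ℕ :=
  Nat.card {T : PlaneTree // T.edges = n ∧ T.youngLeaves = 0}

noncomputable def nonLeafNoYoungCount (n : ℕ) : ℕ :=
  Nat.card {t : PlaneTree // t.edges = n ∧ t ≠ node [] ∧ t.youngLeaves = 0}

/-- `cons (node []) u` has no young leaves iff every subtree at the root of `u` is a non-leaf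
without young leaves. -/
noncomputable def leafFirstNoYoungCount (n : ℕ) : ℕ :=
  Nat.card {u : PlaneTree // u.edges = n ∧ (cons (node []) u).youngLeaves = 0}

theorem card_edges_zero {P : PlaneTree → Prop} (hP : P (node [])) :
    Nat.card {T : PlaneTree // T.edges = 0 ∧ P T} = 1 := by
  rw [Nat.card_eq_one_iff_unique]
  refine ⟨⟨fun ⟨T, hT, _⟩ ⟨U, hU, _⟩ => ?_⟩,
    ⟨node [], edges_eq_zero_iff.2 rfl, hP⟩⟩
  simp [edges_eq_zero_iff.1 hT, edges_eq_zero_iff.1 hU]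

theorem noYoungCount_zero : noYoungCount 0 = 1 :=
  card_edges_zero youngLeaves_leaf

theorem leafFirstNoYoungCount_zero : leafFirstNoYoungCount 0 = 1 :=
  card_edges_zero (by simp [cons, youngLeaves_node_cons, youngLeaves_leaf])

theorem nonLeafNoYoungCount_zero : nonLeafNoYoungCount 0 = 0 :=
  Nat.card_eq_zero.2 (Or.inl ⟨fun ⟨_, ht, hne, _⟩ => hne (edges_eq_zero_iff.1 ht)⟩)

theorem nonLeafNoYoungCount_succ (n : ℕ) : nonLeafNoYoungCount (n + 1) = noYoungCount (n + 1) :=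
  Nat.card_congr <| Equiv.subtypeEquivRight fun _ =>
    ⟨fun ⟨he, _, hy⟩ => ⟨he, hy⟩,
      fun ⟨he, hy⟩ => ⟨he, fun h => by simp [h, edges_node] at he, hy⟩⟩

theorem noYoungCount_succ (n : ℕ) :
    noYoungCount (n + 1) =
      ∑ p ∈ antidiagonal n, noYoungCount p.1 * leafFirstNoYoungCount p.2 :=
  card_edges_succ_eq_sum_antidiagonal _ _ _
    (fun t u => by rw [youngLeaves_cons, Nat.add_eq_zero_iff]) n

theorem leafFirstNoYoungCount_succ (n : ℕ) :
    leafFirstNoYoungCount (n + 1) =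
      ∑ p ∈ antidiagonal n, nonLeafNoYoungCount p.1 * leafFirstNoYoungCount p.2 := by
  refine card_edges_succ_eq_sum_antidiagonal _ _ _ (fun t u => ?_) n
  rw [youngLeaves_cons_leaf_cons, Nat.add_eq_zero_iff, Nat.add_eq_zero_iff, isLeafInd_eq_zero_iff,
    and_assoc]

end PlaneTree

/-- The number of plane trees with `n` edges having no young leaves is `M_{n-1}`. -/
theorem card_planeTrees_no_young (n : ℕ) (hn : 1 ≤ n) :
    Nat.card {T : PlaneTree // T.edges = n ∧ T.youngLeaves = 0} = motzkin (n - 1) := by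
  obtain ⟨m, rfl⟩ := Nat.exists_eq_add_of_le' hn
  have hsplit := succ_eq_add_of_sum_antidiagonal PlaneTree.noYoungCount_zero
    PlaneTree.nonLeafNoYoungCount_zero PlaneTree.nonLeafNoYoungCount_succ
    PlaneTree.noYoungCount_succ PlaneTree.leafFirstNoYoungCount_succ
  have hself := add_eq_sum_antidiagonal_mul_self PlaneTree.noYoungCount_zero
    PlaneTree.leafFirstNoYoungCount_zero PlaneTree.noYoungCount_succ hsplit
  have hone : PlaneTree.noYoungCount 1 = 1 := by
    simp [PlaneTree.noYoungCount_succ, PlaneTree.noYoungCount_zero,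
      PlaneTree.leafFirstNoYoungCount_zero]
  rw [Nat.add_sub_cancel]
  exact succ_eq_motzkin_of_sum_antidiagonal_mul_self PlaneTree.noYoungCount_zero hone hself m
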